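/- Let W ⊆ Σ^ω be prefix-independent and positional over Eve-games. Then for all nonempty finite words α, β ∈ Σ⁺, if (αβ)^ω ∈ W then α^ω ∈ W or β^ω ∈ W. -/

import Mathlib

universe u

/-- Concatenation of a finite word with an infinite word. -/
def wcat {A : Type*} (u : List A) (x : ℕ → A) : ℕ → A := fun n =>
  if h : n < u.length then u.get ⟨n, h⟩ else x (n - u.length)

/-- The resid of a language of infinite words with respect to a finite word. -/
def resid {A : Type*} (L : Set (ℕ → A)) (u : List A) : Set (ℕ → A) := {x | wcat u x ∈ L}

/-- The infinite word `w^ω` obtained by repeating a (nonempty) finite word `w`. -/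
def omegaPow {A : Type*} [Inhabited A] (w : List A) : ℕ → A :=
  fun n => w.getD (n % w.length) default

/-- The path obtained from `v` by following the positional strategy `σ`. -/
def stratPath {V A : Type*} (σ : V → A × V) (v : V) : ℕ → V
  | 0 => v
  | n + 1 => (σ (stratPath σ v n)).2

/-- `W` is positional over Eve-games: in every (possibly infinite) Eve-game, i.e.
every `A`-labelled directed graph in which each vertex has an outgoing edge, there
is a single positional strategy winning from every vertex from which some winning
play exists. -/
def PositionalEve {A : Type u} (W : Set (ℕ → A)) : Prop :=
  ∀ (V : Type u) (E : V → A → V → Prop), (∀ v, ∃ a v', E v a v') →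
    ∃ σ : V → A × V, (∀ v, E v (σ v).1 (σ v).2) ∧
      ∀ v, (∃ (ρ : ℕ → V) (lab : ℕ → A), ρ 0 = v ∧
              (∀ n, E (ρ n) (lab n) (ρ (n + 1))) ∧ lab ∈ W) →
        (fun n => (σ (stratPath σ v n)).1) ∈ W

/-! In the flower game a single choice vertex carries one cycle, a petal labelled `w b`, for each
`b`. A positional strategy makes the same choice at every return to the centre, so its play from
there is some `(w b)^ω`. The play alternating the petals `α` and `β` is labelled `(αβ)^ω`, so Eve
wins from the centre, and a positional winning strategy yields `α^ω ∈ W` or `β^ω ∈ W`. -/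

lemma omegaPow_congr {A : Type*} [Inhabited A] (v : List A) {i j : ℕ}
    (h : i ≡ j [MOD v.length]) : omegaPow v i = omegaPow v j := by
  unfold omegaPow
  rw [(h : i % v.length = j % v.length)]

lemma omegaPow_append_of_lt {A : Type*} [Inhabited A] {v v' : List A} {r : ℕ}
    (hr : r < v.length) : omegaPow (v ++ v') r = omegaPow v r := by
  have hr' : r < (v ++ v').length := by rw [List.length_append]; omega
  simp only [omegaPow, Nat.mod_eq_of_lt hr, Nat.mod_eq_of_lt hr', List.getD_append _ _ _ _ hr]

lemma omegaPow_append_of_le {A : Type*} [Inhabited A] {v v' : List A} {r : ℕ}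
    (hr : v.length ≤ r) (hr' : r < (v ++ v').length) :
    omegaPow (v ++ v') r = omegaPow v' (r - v.length) := by
  have hr'' : r - v.length < v'.length := by rw [List.length_append] at hr'; omega
  simp only [omegaPow, Nat.mod_eq_of_lt hr'', Nat.mod_eq_of_lt hr',
    List.getD_append_right _ _ _ _ hr]

namespace Flower

variable {A : Type u} {ι : Type} (w : ι → List A)

/-- `⟨none⟩` is the centre; `⟨some (b, i)⟩` is the vertex of petal `b` after its first
`i` letters (meaningful for `0 < i < (w b).length`). -/
abbrev Vertex (ι : Type) : Type u := ULift.{u} (Option (ι × ℕ))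

def pos (b : ι) (i : ℕ) : Vertex.{u} ι :=
  ⟨if i % (w b).length = 0 then none else some (b, i % (w b).length)⟩

variable {w}

lemma pos_congr {b : ι} {i j : ℕ} (h : i ≡ j [MOD (w b).length]) : pos w b i = pos w b j := by
  unfold pos
  rw [(h : i % (w b).length = j % (w b).length)]

lemma pos_eq_center_iff {b : ι} {i : ℕ} : pos w b i = ⟨none⟩ ↔ i % (w b).length = 0 := by
  unfold pos
  split_ifs with h <;> simp [h]

lemma pos_of_mod_ne_zero {b : ι} {i : ℕ} (h : i % (w b).length ≠ 0) :
    pos w b i = ⟨some (b, i % (w b).length)⟩ := by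
  simp [pos, h]

lemma pos_zero (b : ι) : pos w b 0 = ⟨none⟩ := pos_eq_center_iff.2 (Nat.zero_mod _)

lemma pos_length (b : ι) : pos w b (w b).length = ⟨none⟩ := pos_eq_center_iff.2 (Nat.mod_self _)

variable (w) in
/-- Phase `r` of the play that goes once around petal `b`, then once around `c`. -/
def twoPetalVertex (b c : ι) (r : ℕ) : Vertex.{u} ι :=
  if r < (w b).length then pos w b r else pos w c (r - (w b).length)

lemma twoPetalVertex_zero (b c : ι) : twoPetalVertex w b c 0 = ⟨none⟩ := by
  unfold twoPetalVertex
  split_ifs <;> simp [pos_zero]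

lemma twoPetalVertex_length (b c : ι) : twoPetalVertex w b c (w b ++ w c).length = ⟨none⟩ := by
  rw [twoPetalVertex, if_neg (by simp), List.length_append, Nat.add_sub_cancel_left, pos_length]

variable [Inhabited A]

variable (w) in
def Edge : Vertex.{u} ι → A → Vertex.{u} ι → Prop
  | ⟨none⟩, a, v => ∃ b, a = omegaPow (w b) 0 ∧ v = pos w b 1
  | ⟨some (b, i)⟩, a, v => a = omegaPow (w b) i ∧ v = pos w b (i + 1)

lemma edge_pos (b : ι) (i : ℕ) : Edge w (pos w b i) (omegaPow (w b) i) (pos w b (i + 1)) := by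
  have hmod : i ≡ i % (w b).length [MOD (w b).length] := (Nat.mod_modEq _ _).symm
  by_cases hi : i % (w b).length = 0
  · rw [pos_eq_center_iff.2 hi]
    refine ⟨b, omegaPow_congr _ (hi ▸ hmod), pos_congr ?_⟩
    simpa [hi] using hmod.add_right 1
  · rw [pos_of_mod_ne_zero hi]
    exact ⟨omegaPow_congr _ hmod, pos_congr (hmod.add_right 1)⟩

lemma edge_pos_iff {b : ι} {i : ℕ} (hi : pos w b i ≠ ⟨none⟩) {a : A} {v : Vertex.{u} ι} :
    Edge w (pos w b i) a v ↔ a = omegaPow (w b) i ∧ v = pos w b (i + 1) := by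
  have hi' : i % (w b).length ≠ 0 := mt pos_eq_center_iff.2 hi
  have hmod : i % (w b).length ≡ i [MOD (w b).length] := Nat.mod_modEq _ _
  rw [pos_of_mod_ne_zero hi']
  simp only [Edge]
  rw [omegaPow_congr _ hmod, pos_congr (hmod.add_right 1)]

lemma edge_total [Nonempty ι] (v : Vertex.{u} ι) : ∃ a v', Edge w v a v' := by
  rcases v with ⟨_ | ⟨b, i⟩⟩
  · obtain ⟨b⟩ := ‹Nonempty ι›
    exact ⟨_, _, b, rfl, rfl⟩
  · exact ⟨_, _, rfl, rfl⟩

section Strategy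

variable {σ : Vertex.{u} ι → A × Vertex.{u} ι} {b : ι}

lemma strategy_pos (hσ : ∀ v, Edge w v (σ v).1 (σ v).2)
    (hb : σ ⟨none⟩ = (omegaPow (w b) 0, pos w b 1)) (i : ℕ) :
    σ (pos w b i) = (omegaPow (w b) i, pos w b (i + 1)) := by
  by_cases hi : pos w b i = ⟨none⟩
  · have hmod : 0 ≡ i [MOD (w b).length] := (pos_eq_center_iff.1 hi).symm
    rw [hi, hb, omegaPow_congr _ hmod, pos_congr (hmod.add_right 1)]
  · obtain ⟨ha, hv⟩ := (edge_pos_iff hi).1 (hσ (pos w b i))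
    exact Prod.ext ha hv

lemma stratPath_center (hσ : ∀ v, Edge w v (σ v).1 (σ v).2)
    (hb : σ ⟨none⟩ = (omegaPow (w b) 0, pos w b 1)) (n : ℕ) :
    stratPath σ ⟨none⟩ n = pos w b n := by
  induction n with
  | zero => exact (pos_zero b).symm
  | succ n ih => rw [stratPath, ih, strategy_pos hσ hb]

end Strategy

lemma exists_petal_of_strategy {σ : Vertex.{u} ι → A × Vertex.{u} ι}
    (hσ : ∀ v, Edge w v (σ v).1 (σ v).2) :
    ∃ b, (fun n => (σ (stratPath σ ⟨none⟩ n)).1) = omegaPow (w b) := by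
  obtain ⟨b, ha, hv⟩ := hσ ⟨none⟩
  have hb : σ ⟨none⟩ = (omegaPow (w b) 0, pos w b 1) := Prod.ext ha hv
  refine ⟨b, funext fun n => ?_⟩
  rw [stratPath_center hσ hb, strategy_pos hσ hb]

lemma exists_omegaPow_mem_of_positionalEve [Nonempty ι] {W : Set (ℕ → A)}
    (hpos : PositionalEve W)
    (hwin : ∃ (ρ : ℕ → Vertex.{u} ι) (lab : ℕ → A), ρ 0 = ⟨none⟩ ∧
      (∀ n, Edge w (ρ n) (lab n) (ρ (n + 1))) ∧ lab ∈ W) :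
    ∃ b, omegaPow (w b) ∈ W := by
  obtain ⟨σ, hσ, hσwin⟩ := hpos (Vertex ι) (Edge w) edge_total
  obtain ⟨b, hb⟩ := exists_petal_of_strategy hσ
  exact ⟨b, hb ▸ hσwin ⟨none⟩ hwin⟩

lemma edge_twoPetalVertex (b c : ι) {r : ℕ} (hr : r < (w b ++ w c).length) :
    Edge w (twoPetalVertex w b c r) (omegaPow (w b ++ w c) r) (twoPetalVertex w b c (r + 1)) := by
  rcases lt_or_ge r (w b).length with hrb | hrb
  · have hnext : twoPetalVertex w b c (r + 1) = pos w b (r + 1) := by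
      rcases (show r + 1 ≤ (w b).length from hrb).lt_or_eq with h | h
      · exact if_pos h
      · rw [twoPetalVertex, if_neg h.not_lt, h, Nat.sub_self, pos_zero, pos_length]
    rw [twoPetalVertex, if_pos hrb, omegaPow_append_of_lt hrb, hnext]
    exact edge_pos b r
  · have hnext : twoPetalVertex w b c (r + 1) = pos w c (r - (w b).length + 1) := by
      rw [twoPetalVertex, if_neg (by omega), Nat.sub_add_comm hrb]
    rw [twoPetalVertex, if_neg (Nat.not_lt.2 hrb), omegaPow_append_of_le hrb hr, hnext]
    exact edge_pos c _

lemma exists_play_omegaPow_append (b c : ι) (hbc : w b ++ w c ≠ []) :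
    ∃ ρ : ℕ → Vertex.{u} ι, ρ 0 = ⟨none⟩ ∧
      ∀ n, Edge w (ρ n) (omegaPow (w b ++ w c) n) (ρ (n + 1)) := by
  set L := (w b ++ w c).length
  have hL : 0 < L := List.length_pos_iff.2 hbc
  refine ⟨fun n => twoPetalVertex w b c (n % L), by simp [twoPetalVertex_zero], fun n => ?_⟩
  have hnext : twoPetalVertex w b c ((n + 1) % L) = twoPetalVertex w b c (n % L + 1) := by
    have hmod : (n + 1) % L = (n % L + 1) % L := ((Nat.mod_modEq n L).symm.add_right 1 :)
    rcases (show n % L + 1 ≤ L from Nat.mod_lt n hL).lt_or_eq with h | h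
    · rw [hmod, Nat.mod_eq_of_lt h]
    · rw [hmod, h, Nat.mod_self, twoPetalVertex_zero, twoPetalVertex_length]
  simp only [hnext, ← omegaPow_congr _ (Nat.mod_modEq n L)]
  exact edge_twoPetalVertex b c (Nat.mod_lt n hL)

end Flower

theorem positional_prefixIndependent_cycle_split {A : Type u} [Inhabited A]
    (W : Set (ℕ → A))
    (hpos : PositionalEve W)
    (α β : List A) (hα : α ≠ [])
    (h : omegaPow (α ++ β) ∈ W) :
    omegaPow α ∈ W ∨ omegaPow β ∈ W := by
  let w : Bool → List A := fun b => bif b then α else β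
  obtain ⟨ρ, hρ0, hρ⟩ :=
    Flower.exists_play_omegaPow_append (w := w) true false (List.append_ne_nil_of_left_ne_nil hα β)
  obtain ⟨b, hb⟩ := Flower.exists_omegaPow_mem_of_positionalEve hpos ⟨ρ, _, hρ0, hρ, h⟩
  cases b
  · exact Or.inr hb
  · exact Or.inl hb
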